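/- Fix a commutative ring R and n : ℕ. Let C be the free R-module with basis {e_{i,j} | i, j ∈ Fin n, j ≤ i}, with coproduct Δ(e_{i,j}) = Σ_{k : j ≤ k ≤ i} e_{k,j} ⊗ e_{i,k}. Define the R-linear 'column shift' map m_c : C → C by m_c(e_{i,j}) = e_{i,j+1} if j+1 ≤ i, and m_c(e_{i,j}) = 0 otherwise. Then (m_c ⊗ id_C) ∘ Δ = Δ ∘ m_c as maps C → C ⊗[R] C. -/

import Mathlib

/-!
On a basis vector `e_{i,j}` both sides equal `Σ_{j < k ≤ i} e_{k,j+1} ⊗ e_{i,k}`: on the left,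
`m_c ⊗ id` kills the term `k = j` of `Δ e_{i,j}`, because `e_{j,j+1}` lies above the diagonal;
on the right, `Δ e_{i,j+1}` has exactly these terms (and `e_{i,j+1} = 0` when `j = i`).
-/

open TensorProduct

/-- Pairs `(i, j)` with `j ≤ i` in `Fin n`: positions of lower triangular matrix entries. -/
def LTIdx (n : ℕ) := {p : Fin n × Fin n // p.2 ≤ p.1}

theorem Fin.sum_Icc_val {n : ℕ} {M : Type*} [AddCommMonoid M] (a b : Fin n) (f : ℕ → M) :
    ∑ k ∈ Finset.Icc a b, f k = ∑ k ∈ Finset.Icc (a : ℕ) b, f k := by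
  rw [← Fin.map_valEmbedding_Icc, Finset.sum_map]
  rfl

namespace LTIdx

open Finset

variable {R : Type*} [CommSemiring R] {n : ℕ}

variable (R n) in
/-- `e_{i,j}` indexed by natural numbers and set to `0` outside the lower triangle, so that
`Δ` and `m_c` are given by formulas without side conditions. -/
noncomputable def entry (i j : ℕ) : LTIdx n →₀ R :=
  if h : j ≤ i ∧ i < n then
    Finsupp.single ⟨(⟨i, h.2⟩, ⟨j, by omega⟩), Fin.mk_le_mk.mpr h.1⟩ 1
  else 0

theorem entry_eq_zero {i j : ℕ} (h : ¬ (j ≤ i ∧ i < n)) : entry R n i j = 0 :=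
  dif_neg h

theorem single_one_eq_entry (s : LTIdx n) :
    Finsupp.single s (1 : R) = entry R n s.1.1 s.1.2 := by
  rw [entry, dif_pos ⟨Fin.le_def.mp s.2, s.1.1.isLt⟩]
  rfl

theorem exists_val_eq {i j : ℕ} (h : j ≤ i ∧ i < n) :
    ∃ s : LTIdx n, (s.1.1 : ℕ) = i ∧ (s.1.2 : ℕ) = j :=
  ⟨⟨(⟨i, h.2⟩, ⟨j, by omega⟩), Fin.mk_le_mk.mpr h.1⟩, rfl, rfl⟩

theorem coproduct_entry {Δ : (LTIdx n →₀ R) →ₗ[R] (LTIdx n →₀ R) ⊗[R] (LTIdx n →₀ R)}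
    (hΔ : ∀ s : LTIdx n,
      Δ (Finsupp.single s 1) =
        ∑ k ∈ (Icc s.1.2 s.1.1).attach,
          Finsupp.single (⟨(k.1, s.1.2), (mem_Icc.mp k.2).1⟩ : LTIdx n) (1 : R) ⊗ₜ[R]
          Finsupp.single (⟨(s.1.1, k.1), (mem_Icc.mp k.2).2⟩ : LTIdx n) (1 : R))
    (i j : ℕ) :
    Δ (entry R n i j) = ∑ k ∈ Icc j i, entry R n k j ⊗ₜ[R] entry R n i k := by
  by_cases h : j ≤ i ∧ i < n
  · obtain ⟨s, rfl, rfl⟩ := exists_val_eq h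
    rw [← single_one_eq_entry, hΔ, ← Fin.sum_Icc_val]
    refine (sum_congr rfl fun k _ ↦ ?_).trans
      (sum_attach _ fun k : Fin n ↦ entry R n k s.1.2 ⊗ₜ[R] entry R n s.1.1 k)
    exact congrArg₂ (· ⊗ₜ[R] ·) (single_one_eq_entry _) (single_one_eq_entry _)
  · rw [entry_eq_zero h, map_zero, eq_comm]
    refine sum_eq_zero fun k hk ↦ ?_
    rw [entry_eq_zero (fun h' ↦ h ⟨(mem_Icc.mp hk).1.trans h'.1, h'.2⟩), tmul_zero]

theorem shift_entry {mc : (LTIdx n →₀ R) →ₗ[R] (LTIdx n →₀ R)}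
    (hmc : ∀ s : LTIdx n,
      mc (Finsupp.single s 1) =
        if h : (s.1.2 : ℕ) + 1 ≤ (s.1.1 : ℕ) then
          Finsupp.single
            (⟨(s.1.1, ⟨(s.1.2 : ℕ) + 1, h.trans_lt s.1.1.isLt⟩), Fin.le_def.mpr h⟩ : LTIdx n)
            (1 : R)
        else 0)
    (i j : ℕ) : mc (entry R n i j) = entry R n i (j + 1) := by
  by_cases h : j ≤ i ∧ i < n
  · obtain ⟨s, rfl, rfl⟩ := exists_val_eq h
    rw [← single_one_eq_entry, hmc]
    split_ifs with hj
    · exact single_one_eq_entry _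
    · exact (entry_eq_zero fun h' ↦ hj h'.1).symm
  · rw [entry_eq_zero h, map_zero, entry_eq_zero fun h' ↦ h ⟨by omega, h'.2⟩]

theorem sum_Icc_entry_succ_tmul (i j : ℕ) :
    ∑ k ∈ Icc j i, entry R n k (j + 1) ⊗ₜ[R] entry R n i k =
      ∑ k ∈ Icc (j + 1) i, entry R n k (j + 1) ⊗ₜ[R] entry R n i k := by
  refine (sum_subset (Icc_subset_Icc_left j.le_succ) fun k hk hk' ↦ ?_).symm
  obtain rfl : k = j := by simp only [mem_Icc] at hk hk'; omega
  rw [entry_eq_zero (by omega), zero_tmul]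

end LTIdx

/-- Second part of Proposition 2: the column shift `m_c(e_{i,j}) = e_{i,j+1}` (zero if the
shifted entry leaves the lower triangle) intertwines the incidence coproduct
`Δ(e_{i,j}) = Σ_{j ≤ k ≤ i} e_{k,j} ⊗ e_{i,k}` via `(m_c ⊗ id) ∘ Δ = Δ ∘ m_c`. -/
theorem column_shift_intertwines_coproduct
    (R : Type*) [CommRing R] (n : ℕ)
    (Δ : (LTIdx n →₀ R) →ₗ[R] (LTIdx n →₀ R) ⊗[R] (LTIdx n →₀ R))
    (hΔ : ∀ s : LTIdx n,
      Δ (Finsupp.single s 1) =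
        ∑ k ∈ (Finset.Icc s.1.2 s.1.1).attach,
          Finsupp.single (⟨(k.1, s.1.2), (Finset.mem_Icc.mp k.2).1⟩ : LTIdx n) (1 : R)
            ⊗ₜ[R]
          Finsupp.single (⟨(s.1.1, k.1), (Finset.mem_Icc.mp k.2).2⟩ : LTIdx n) (1 : R))
    (mc : (LTIdx n →₀ R) →ₗ[R] (LTIdx n →₀ R))
    (hmc : ∀ s : LTIdx n,
      mc (Finsupp.single s 1) =
        if h : (s.1.2 : ℕ) + 1 ≤ (s.1.1 : ℕ) then
          Finsupp.single
            (⟨(s.1.1, ⟨(s.1.2 : ℕ) + 1, by have := s.1.1.isLt; omega⟩),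
              by rw [Fin.le_def]; exact h⟩ : LTIdx n) (1 : R)
        else 0) :
    (TensorProduct.map mc LinearMap.id) ∘ₗ Δ = Δ ∘ₗ mc := by
  refine Finsupp.lhom_ext' fun s ↦ LinearMap.ext_ring ?_
  simp only [LinearMap.comp_apply, Finsupp.lsingle_apply, LTIdx.single_one_eq_entry]
  rw [LTIdx.coproduct_entry hΔ, LTIdx.shift_entry hmc, LTIdx.coproduct_entry hΔ, map_sum,
    ← LTIdx.sum_Icc_entry_succ_tmul]
  simp only [map_tmul, LTIdx.shift_entry hmc, LinearMap.id_apply]
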